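/- arXiv:2511.07655 — 3 statements merged into one kernel-verified Lean document; each statement's English description precedes it below -/
import Mathlib

section
/- Let n ≥ 1 and let ρ be a pairwise comparison protocol: ρ_{uv}(F) = τ_{uv}(F) where τ : ℝⁿ → ℝ_{≥0}^{n×n} is sign-preserving, i.e. sign(τ_{uv}(F)) = sign(max(0, F_v − F_u)) for all F and all u, v. Define V_u(σ, F) = ∑_{u'} σ_{u'} τ_{u'u}(F) − σ_u ∑_{u'} τ_{uu'}(F) for σ ∈ ℝⁿ_{≥0}. Then for all F ∈ ℝⁿ and σ ∈ ℝⁿ_{≥0}, the correlation ∑_u V_u(σ, F) F_u ≥ 0, with equality if and only if V(σ, F) = 0 (positive correlation). -/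
/-!
Writing `f u v = σ u * τ u v` for the mass that moves from strategy `u` to strategy `v`, the
correlation `∑ u, V u * F u` telescopes into `∑ u v, f u v * (F v - F u)`. Sign preservation makes
every flow nonnegative and lets mass move only towards strictly better strategies, so each term is
nonnegative, and it vanishes only if the flow does; a vanishing flow has vanishing net inflow.
-/

open Finset

namespace Real

theorem nonneg_of_sign_eq_sign_max_zero {x y : ℝ} (h : sign x = sign (max 0 y)) : 0 ≤ x := by
  by_contra! hx
  rw [sign_of_neg hx] at h
  rcases (le_max_left 0 y).eq_or_lt with hy | hy
  · rw [← hy, sign_zero] at h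
    norm_num at h
  · rw [sign_of_pos hy] at h
    norm_num at h

theorem eq_zero_of_sign_eq_sign_max_zero {x y : ℝ} (h : sign x = sign (max 0 y)) (hy : y ≤ 0) :
    x = 0 := by
  rwa [max_eq_left hy, sign_zero, sign_eq_zero_iff] at h

end Real

section Flow

variable {ι : Type*} {f : ι → ι → ℝ} {F : ι → ℝ}

theorem mul_sub_nonneg_of_flow_improving (hf : ∀ u v, 0 ≤ f u v)
    (himp : ∀ u v, F v ≤ F u → f u v = 0) (u v : ι) : 0 ≤ f u v * (F v - F u) := by
  rcases le_or_gt (F v) (F u) with h | h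
  · simp [himp u v h]
  · exact mul_nonneg (hf u v) (sub_nonneg.mpr h.le)

variable [Fintype ι]

/-- `f u v` is the mass moving from `u` to `v`. -/
def netInflow {R : Type*} [Ring R] (f : ι → ι → R) (u : ι) : R :=
  ∑ u', f u' u - ∑ v, f u v

theorem sum_netInflow_mul {R : Type*} [CommRing R] (f : ι → ι → R) (F : ι → R) :
    ∑ u, netInflow f u * F u = ∑ u, ∑ v, f u v * (F v - F u) := by
  simp only [netInflow, sub_mul, sum_mul, mul_sub, sum_sub_distrib]
  rw [sum_comm (f := fun u u' => f u' u * F u)]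

theorem sum_netInflow_mul_nonneg (hf : ∀ u v, 0 ≤ f u v)
    (himp : ∀ u v, F v ≤ F u → f u v = 0) : 0 ≤ ∑ u, netInflow f u * F u := by
  rw [sum_netInflow_mul]
  exact sum_nonneg fun u _ => sum_nonneg fun v _ => mul_sub_nonneg_of_flow_improving hf himp u v

theorem eq_zero_of_sum_netInflow_mul_eq_zero (hf : ∀ u v, 0 ≤ f u v)
    (himp : ∀ u v, F v ≤ F u → f u v = 0) (h : ∑ u, netInflow f u * F u = 0) (u v : ι) :
    f u v = 0 := by
  have hterm := mul_sub_nonneg_of_flow_improving hf himp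
  rw [sum_netInflow_mul, sum_eq_zero_iff_of_nonneg fun u _ => sum_nonneg fun v _ => hterm u v]
    at h
  have huv := (sum_eq_zero_iff_of_nonneg fun v _ => hterm u v).mp (h u (mem_univ u)) v (mem_univ v)
  rcases le_or_gt (F v) (F u) with hle | hlt
  · exact himp u v hle
  · exact (mul_eq_zero.mp huv).resolve_right (sub_ne_zero.mpr hlt.ne')

theorem sum_netInflow_mul_eq_zero_iff (hf : ∀ u v, 0 ≤ f u v)
    (himp : ∀ u v, F v ≤ F u → f u v = 0) :
    ∑ u, netInflow f u * F u = 0 ↔ ∀ u, netInflow f u = 0 := by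
  refine ⟨fun h u => ?_, fun h => by simp [h]⟩
  simp [netInflow, eq_zero_of_sum_netInflow_mul_eq_zero hf himp h]

end Flow

theorem stmt_2_general (n : ℕ) (τ : (Fin n → ℝ) → Fin n → Fin n → ℝ)
    (hsign : ∀ F u v, Real.sign (τ F u v) = Real.sign (max 0 (F v - F u))) :
    ∀ (F σ : Fin n → ℝ), (∀ u, 0 ≤ σ u) →
      let V : Fin n → ℝ := fun u => (∑ u', σ u' * τ F u' u) - σ u * ∑ u', τ F u u'
      0 ≤ ∑ u, V u * F u ∧ (∑ u, V u * F u = 0 ↔ ∀ u, V u = 0) := by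
  intro F σ hσ V
  have hV : V = netInflow fun u v => σ u * τ F u v := by
    ext u
    simp only [V, netInflow, mul_sum]
  have hf (u v : Fin n) : 0 ≤ σ u * τ F u v :=
    mul_nonneg (hσ u) (Real.nonneg_of_sign_eq_sign_max_zero (hsign F u v))
  have himp (u v : Fin n) (h : F v ≤ F u) : σ u * τ F u v = 0 := by
    rw [Real.eq_zero_of_sign_eq_sign_max_zero (hsign F u v) (sub_nonpos.mpr h), mul_zero]
  rw [hV]
  exact ⟨sum_netInflow_mul_nonneg hf himp, sum_netInflow_mul_eq_zero_iff hf himp⟩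

/-- Pairwise comparison revision protocols satisfy positive correlation. -/
theorem stmt_2 (n : ℕ) (hn : 1 ≤ n) (τ : (Fin n → ℝ) → Fin n → Fin n → ℝ)
    (hτnn : ∀ F u v, 0 ≤ τ F u v)
    (hsign : ∀ F u v, Real.sign (τ F u v) = Real.sign (max 0 (F v - F u))) :
    ∀ (F σ : Fin n → ℝ), (∀ u, 0 ≤ σ u) →
      let V : Fin n → ℝ := fun u => (∑ u', σ u' * τ F u' u) - σ u * ∑ u', τ F u u'
      0 ≤ ∑ u, V u * F u ∧ (∑ u, V u * F u = 0 ↔ ∀ u, V u = 0) :=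
  stmt_2_general n τ hsign
end

section
/- Let n ≥ 1, let τ : ℝⁿ → ℝ_{≥0}^{n×n} be sign-preserving (sign(τ_{uv}(F)) = sign(max(0, F_v − F_u))), let σ ∈ ℝⁿ_{≥0} and F ∈ ℝⁿ. Suppose the stationarity condition holds: for every u, ∑_{u'} σ_{u'} τ_{u'u}(F) − σ_u ∑_{u'} τ_{uu'}(F) = 0. Then for every u with σ_u > 0, F_u ≥ F_v for all v with σ_v > 0; in other words, all indices in the support of σ attain the same value of F, and it is the maximum of F over the support. -/
/-!
Let `a` minimise `F` on the support of `σ`. Mass only flows towards strictly larger values of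
`F`, so nothing flows into `a`; stationarity then forces the outflow from `a` to vanish, which
by sign preservation means no index has a value of `F` above `F a`. So for `u`, `v` in the
support, `F v ≤ F a ≤ F u`.
-/

open Finset

lemma Real.eq_zero_iff_of_sign_eq_sign_max {x y : ℝ} (h : Real.sign x = Real.sign (max 0 y)) :
    x = 0 ↔ y ≤ 0 := by
  rw [← Real.sign_eq_zero_iff, h, Real.sign_eq_zero_iff, max_eq_left_iff]

section StationaryFlow

variable {ι : Type*} [Fintype ι] {t : ι → ι → ℝ} {σ F : ι → ℝ} {a : ι}

lemma inflow_eq_zero_of_forall_le (ht : ∀ u v, t u v = 0 ↔ F v ≤ F u) (hσ : ∀ u, 0 ≤ σ u)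
    (ha : ∀ i, 0 < σ i → F a ≤ F i) : ∑ i, σ i * t i a = 0 := by
  refine sum_eq_zero fun i _ => ?_
  rcases (hσ i).eq_or_lt with hi | hi
  · rw [← hi, zero_mul]
  · rw [(ht i a).2 (ha i hi), mul_zero]

lemma outflow_eq_zero_of_inflow_eq_zero (hstat : (∑ i, σ i * t i a) - σ a * ∑ i, t a i = 0)
    (hin : ∑ i, σ i * t i a = 0) (ha : 0 < σ a) : ∑ i, t a i = 0 := by
  rw [hin, zero_sub, neg_eq_zero] at hstat
  exact (mul_eq_zero.1 hstat).resolve_left ha.ne'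

lemma le_of_stationary_of_forall_le (ht_nonneg : ∀ u v, 0 ≤ t u v)
    (ht : ∀ u v, t u v = 0 ↔ F v ≤ F u) (hσ : ∀ u, 0 ≤ σ u)
    (hstat : ∀ u, (∑ i, σ i * t i u) - σ u * ∑ i, t u i = 0)
    (haσ : 0 < σ a) (ha : ∀ i, 0 < σ i → F a ≤ F i) (w : ι) : F w ≤ F a := by
  have hout := outflow_eq_zero_of_inflow_eq_zero (hstat a)
    (inflow_eq_zero_of_forall_le ht hσ ha) haσ
  exact (ht a w).1 ((sum_eq_zero_iff_of_nonneg fun i _ => ht_nonneg a i).1 hout w (mem_univ w))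

end StationaryFlow

theorem stmt_3_general (n : ℕ) (τ : (Fin n → ℝ) → Fin n → Fin n → ℝ)
    (hτnn : ∀ F u v, 0 ≤ τ F u v)
    (hsign : ∀ F u v, Real.sign (τ F u v) = Real.sign (max 0 (F v - F u)))
    (σ F : Fin n → ℝ) (hσ : ∀ u, 0 ≤ σ u)
    (hstat : ∀ u, (∑ u', σ u' * τ F u' u) - σ u * ∑ u', τ F u u' = 0) :
    ∀ u, 0 < σ u → ∀ v, 0 < σ v → F v ≤ F u := by
  intro u hu v _
  have ht : ∀ u v, τ F u v = 0 ↔ F v ≤ F u := fun u v => by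
    rw [Real.eq_zero_iff_of_sign_eq_sign_max (hsign F u v), sub_nonpos]
  obtain ⟨a, haσ, ha⟩ := (univ.filter fun i => 0 < σ i).exists_min_image F ⟨u, by simpa using hu⟩
  simp only [mem_filter, mem_univ, true_and] at haσ ha
  calc F v ≤ F a := le_of_stationary_of_forall_le (hτnn F) ht hσ hstat haσ ha v
    _ ≤ F u := ha u hu

/-- Under a sign-preserving rate map, stationarity of the revision flows implies that
all indices in the support of `σ` attain the same value of `F`, namely the maximum
of `F` over the support. -/
theorem stmt_3 (n : ℕ) (hn : 1 ≤ n) (τ : (Fin n → ℝ) → Fin n → Fin n → ℝ)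
    (hτnn : ∀ F u v, 0 ≤ τ F u v)
    (hsign : ∀ F u v, Real.sign (τ F u v) = Real.sign (max 0 (F v - F u)))
    (σ F : Fin n → ℝ) (hσ : ∀ u, 0 ≤ σ u)
    (hstat : ∀ u, (∑ u', σ u' * τ F u' u) - σ u * ∑ u', τ F u u' = 0) :
    ∀ u, 0 < σ u → ∀ v, 0 < σ v → F v ≤ F u :=
  stmt_3_general n τ hτnn hsign σ F hσ hstat
end

section
/- Let Q ∈ ℝ^{p×p} be a Markov generator (acting on distributions via μ̇ = Qᵀμ + g(t)) and let g : [0,∞) → ℝ^p be continuous. Let μ(t) solve μ̇(t) = Qᵀμ(t) + g(t) and let μ* satisfy Qᵀμ* = 0. Then the upper right Dini derivative of t ↦ ‖μ(t) − μ*‖₁ satisfies D⁺‖μ(t) − μ*‖₁ ≤ ‖g(t)‖₁ for all t ≥ 0. -/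
/-!
For small `h > 0` the matrix `1 + h Q` is row-stochastic, so `ν ↦ ν + h Qᵀν` does not increase
the `ℓ¹` norm. Since `Qᵀμ* = 0`, one Euler step gives
`μ(t+h) − μ* = (1 + h Qᵀ)(μ(t) − μ*) + h g(t) + o(h)`, hence
`‖μ(t+h) − μ*‖₁ ≤ ‖μ(t) − μ*‖₁ + h ‖g(t)‖₁ + o(h)`, which is the Dini-derivative bound.
-/

open Filter Topology

section

variable {ι : Type*} [Fintype ι]

theorem sum_abs_sum_mul_le_of_row_sum_le_one (M : ι → ι → ℝ) (hM : ∀ i j, 0 ≤ M i j)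
    (hrow : ∀ i, ∑ j, M i j ≤ 1) (ν : ι → ℝ) :
    ∑ j, |∑ i, M i j * ν i| ≤ ∑ i, |ν i| :=
  calc ∑ j, |∑ i, M i j * ν i|
      ≤ ∑ j, ∑ i, M i j * |ν i| := by
        gcongr with j
        refine (Finset.abs_sum_le_sum_abs _ _).trans_eq ?_
        simp only [abs_mul, abs_of_nonneg (hM _ j)]
    _ = ∑ i, (∑ j, M i j) * |ν i| := by rw [Finset.sum_comm]; simp only [Finset.sum_mul]
    _ ≤ ∑ i, |ν i| := Finset.sum_le_sum fun i _ => mul_le_of_le_one_left (abs_nonneg _) (hrow i)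

theorem sum_abs_add_mul_generator_le [DecidableEq ι] (Q : ι → ι → ℝ)
    (hoff : ∀ s s', s ≠ s' → 0 ≤ Q s s') (hrow : ∀ s, ∑ s', Q s s' = 0) {h : ℝ} (hh : 0 ≤ h)
    (hdiag : ∀ s, 0 ≤ 1 + h * Q s s) (ν : ι → ℝ) :
    ∑ s', |ν s' + h * ∑ s, Q s s' * ν s| ≤ ∑ s, |ν s| := by
  have hstoch := sum_abs_sum_mul_le_of_row_sum_le_one
    (fun s s' => (if s = s' then 1 else 0) + h * Q s s') ?_ ?_ ν
  · convert hstoch using 3 with s'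
    simp [add_mul, Finset.sum_add_distrib, Finset.mul_sum, mul_assoc]
  · intro s s'
    rcases eq_or_ne s s' with rfl | hne
    · simpa using hdiag s
    · simpa [hne] using mul_nonneg hh (hoff s s' hne)
  · intro s
    simp [Finset.sum_add_distrib, ← Finset.mul_sum, hrow]

theorem sum_abs_sub_div_le_of_generator [DecidableEq ι] (Q : ι → ι → ℝ)
    (hoff : ∀ s s', s ≠ s' → 0 ≤ Q s s') (hrow : ∀ s, ∑ s', Q s s' = 0) {h : ℝ} (hh : 0 < h)
    (hdiag : ∀ s, 0 ≤ 1 + h * Q s s) (ν x g : ι → ℝ) :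
    (∑ s, |x s| - ∑ s, |ν s|) / h
      ≤ ∑ s, |g s| + ∑ s', |(x s' - ν s') / h - ((∑ s, Q s s' * ν s) + g s')| := by
  set w := fun s' => (x s' - ν s') / h - ((∑ s, Q s s' * ν s) + g s')
  have hx : ∀ s', x s' = (ν s' + h * ∑ s, Q s s' * ν s) + h * g s' + h * w s' := by
    intro s'; simp only [w]; field_simp; ring
  rw [div_le_iff₀ hh, sub_le_iff_le_add]
  calc ∑ s, |x s|
      ≤ ∑ s', (|ν s' + h * ∑ s, Q s s' * ν s| + h * |g s'| + h * |w s'|) := by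
        gcongr with s'
        have htri := abs_add_three (ν s' + h * ∑ s, Q s s' * ν s) (h * g s') (h * w s')
        rwa [abs_mul, abs_mul, abs_of_pos hh, ← hx s'] at htri
    _ = ∑ s', |ν s' + h * ∑ s, Q s s' * ν s| + h * (∑ s, |g s| + ∑ s', |w s'|) := by
        simp only [Finset.sum_add_distrib, ← Finset.mul_sum]; ring
    _ ≤ ∑ s, |ν s| + h * (∑ s, |g s| + ∑ s', |w s'|) :=
        add_le_add_left (sum_abs_add_mul_generator_le Q hoff hrow hh.le hdiag ν) _
    _ = (∑ s, |g s| + ∑ s', |w s'|) * h + ∑ s, |ν s| := by ring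

theorem tendsto_sum_abs_slope_sub {F : ℝ → ι → ℝ} {v : ι → ℝ} {t : ℝ}
    (hF : HasDerivWithinAt F v (Set.Ioi t) t) :
    Tendsto (fun h => ∑ s, |(F (t + h) s - F t s) / h - v s|) (𝓝[>] 0) (𝓝 0) := by
  have hshift : Tendsto (t + ·) (𝓝[>] 0) (𝓝[>] t) := by
    have := (map_add_left_nhdsGT (c := t) (a := (0 : ℝ))).le
    rwa [add_zero] at this
  have hslope := ((hasDerivWithinAt_iff_tendsto_slope' (lt_irrefl t)).1 hF).comp hshift
  have hcont : Continuous fun y : ι → ℝ => ∑ s, |y s - v s| := by fun_prop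
  convert (hcont.tendsto v).comp hslope using 2 with h
  · simp [slope_def_module, div_eq_inv_mul]
  · simp

end

theorem EReal.limsup_coe_le_of_eventually_le_add {α : Type*} {l : Filter α} [l.NeBot]
    {f r : α → ℝ} {c : ℝ} (hf : ∀ᶠ a in l, f a ≤ c + r a) (hr : Tendsto r l (𝓝 0)) :
    limsup (fun a => (f a : EReal)) l ≤ c := by
  calc limsup (fun a => (f a : EReal)) l ≤ limsup (fun a => ((c + r a : ℝ) : EReal)) l :=
        limsup_le_limsup (hf.mono fun a ha => EReal.coe_le_coe_iff.2 ha)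
    _ = c := (EReal.tendsto_coe.2 (by simpa using hr.const_add c)).limsup_eq

theorem stmt_15_general (p : ℕ) (Q : Fin p → Fin p → ℝ)
    (hoff : ∀ s s', s ≠ s' → 0 ≤ Q s s') (hrow : ∀ s, ∑ s', Q s s' = 0)
    (g : ℝ → Fin p → ℝ)
    (μ : ℝ → Fin p → ℝ) (μstar : Fin p → ℝ)
    (hμ : ∀ t ∈ Set.Ici (0 : ℝ),
      HasDerivWithinAt μ (fun s' => (∑ s, Q s s' * μ t s) + g t s') (Set.Ici 0) t)
    (hstat : ∀ s', ∑ s, Q s s' * μstar s = 0) :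
    ∀ t ∈ Set.Ici (0 : ℝ),
      Filter.limsup
        (fun h : ℝ =>
          ((((∑ s, |μ (t + h) s - μstar s|) - ∑ s, |μ t s - μstar s|) / h : ℝ) : EReal))
        (nhdsWithin 0 (Set.Ioi 0)) ≤ ((∑ s, |g t s| : ℝ) : EReal) := by
  intro t ht
  have hright := (hμ t ht).mono fun x (hx : t < x) => ht.trans hx.le
  have hdiag : ∀ᶠ h in 𝓝[>] (0 : ℝ), ∀ s, 0 ≤ 1 + h * Q s s := by
    refine eventually_all.2 fun s => ?_
    have hone : Tendsto (fun h : ℝ => 1 + h * Q s s) (𝓝 0) (𝓝 1) :=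
      (by fun_prop : Continuous fun h : ℝ => 1 + h * Q s s).tendsto' 0 1 (by simp)
    exact (hone.eventually (eventually_ge_nhds one_pos)).filter_mono nhdsWithin_le_nhds
  refine EReal.limsup_coe_le_of_eventually_le_add ?_ (tendsto_sum_abs_slope_sub hright)
  filter_upwards [hdiag, self_mem_nhdsWithin] with h hdiag hh
  have hbound := sum_abs_sub_div_le_of_generator Q hoff hrow hh hdiag
    (μ t - μstar) (μ (t + h) - μstar) (g t)
  simpa [mul_sub, Finset.sum_sub_distrib, hstat] using hbound

/-- Perturbed-contraction estimate: if `μ̇ = Qᵀμ + g(t)` with `Q` a Markov generator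
and `Qᵀμ* = 0`, then the upper right Dini derivative of `t ↦ ‖μ(t) − μ*‖₁` is bounded
by `‖g(t)‖₁`. -/
theorem stmt_15 (p : ℕ) (Q : Fin p → Fin p → ℝ)
    (hoff : ∀ s s', s ≠ s' → 0 ≤ Q s s') (hrow : ∀ s, ∑ s', Q s s' = 0)
    (g : ℝ → Fin p → ℝ) (hg : Continuous g)
    (μ : ℝ → Fin p → ℝ) (μstar : Fin p → ℝ)
    (hμ : ∀ t ∈ Set.Ici (0 : ℝ),
      HasDerivWithinAt μ (fun s' => (∑ s, Q s s' * μ t s) + g t s') (Set.Ici 0) t)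
    (hstat : ∀ s', ∑ s, Q s s' * μstar s = 0) :
    ∀ t ∈ Set.Ici (0 : ℝ),
      Filter.limsup
        (fun h : ℝ =>
          ((((∑ s, |μ (t + h) s - μstar s|) - ∑ s, |μ t s - μstar s|) / h : ℝ) : EReal))
        (nhdsWithin 0 (Set.Ioi 0)) ≤ ((∑ s, |g t s| : ℝ) : EReal) :=
  stmt_15_general p Q hoff hrow g μ μstar hμ hstat
end
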